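/- The big q-Hermite polynomials H_n(x|a,q) := ∑_{i=0}^n [n choose i]_q q^{binom(i,2)} (-a)^i H_{n-i}(x|q) satisfy the three-term recurrence x H_n(x|a,q) = H_{n+1}(x|a,q) + a q^n H_n(x|a,q) + [n]_q H_{n-1}(x|a,q) for n ≥ 0, with H_{-1}(x|a,q) = 0. -/

import Mathlib

noncomputable def qint (q : ℝ) (n : ℕ) : ℝ := ∑ i ∈ Finset.range n, q ^ i

noncomputable def qfact (q : ℝ) (n : ℕ) : ℝ := ∏ i ∈ Finset.range n, qint q (i + 1)

noncomputable def qPoch (a q : ℝ) (n : ℕ) : ℝ := ∏ i ∈ Finset.range n, (1 - a * q ^ i)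

/-- Gaussian binomial coefficient as a polynomial in `q`, via the Pascal-type recurrence. -/
noncomputable def qbinom (q : ℝ) : ℕ → ℕ → ℝ
  | _, 0 => 1
  | 0, _ + 1 => 0
  | n + 1, k + 1 => qbinom q n k + q ^ (k + 1) * qbinom q n (k + 1)

/-- Rescaled continuous q-Hermite polynomials `H_n(x|q)`. -/
noncomputable def qHermite (q x : ℝ) : ℕ → ℝ
  | 0 => 1
  | 1 => x
  | n + 2 => x * qHermite q x (n + 1) - qint q (n + 1) * qHermite q x n

/-- Chebyshev polynomials of the second kind. -/
noncomputable def Ucheb (x : ℝ) : ℕ → ℝ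
  | 0 => 1
  | 1 => 2 * x
  | n + 2 => 2 * x * Ucheb x (n + 1) - Ucheb x n

/-- Probabilist's Hermite polynomials. -/
noncomputable def He (x : ℝ) : ℕ → ℝ
  | 0 => 1
  | 1 => x
  | n + 2 => x * He x (n + 1) - (n + 1 : ℝ) * He x n

/-- Big q-Hermite polynomials `H_n(x|a,q)`. -/
noncomputable def bigH (q a x : ℝ) (n : ℕ) : ℝ :=
  ∑ i ∈ Finset.range (n + 1),
    qbinom q n i * q ^ (i.choose 2) * (-a) ^ i * qHermite q x (n - i)

/-- Al-Salam--Chihara polynomials `P_n(x|y,ρ,q)`. -/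
noncomputable def ASC (q x y ρ : ℝ) : ℕ → ℝ
  | 0 => 1
  | 1 => x - ρ * y
  | n + 2 =>
      (x - ρ * y * q ^ (n + 1)) * ASC q x y ρ (n + 1)
        - qint q (n + 1) * (1 - ρ ^ 2 * q ^ n) * ASC q x y ρ n

/-- Auxiliary polynomials `B_n(x|q)`. -/
noncomputable def Bpoly (q x : ℝ) : ℕ → ℝ
  | 0 => 1
  | 1 => -x
  | n + 2 => -q ^ (n + 1) * x * Bpoly q x (n + 1) + q ^ n * qint q (n + 1) * Bpoly q x n

/-!
The second q-Pascal rule `[n+1, k+1] = q^(n-k) [n, k] + [n, k+1]` splits `H_{n+1}(x|a,q)` into two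
sums. In the one weighted by `q^(n-k)`, the factor `q^(n-k)` combines with the extra `q^k` of
`q^binom(k+1, 2)` into `q^n`, giving `-a q^n H_n(x|a,q)`. In the other, the recurrence
`H_{m+1} = x H_m - [m]_q H_{m-1}` and the absorption identity `[n-k]_q [n, k] = [n]_q [n-1, k]`
give `x H_n(x|a,q) - [n]_q H_{n-1}(x|a,q)`.
-/

theorem qint_succ (q : ℝ) (n : ℕ) : qint q (n + 1) = qint q n + q ^ n :=
  Finset.sum_range_succ _ _

theorem qbinom_zero_right (q : ℝ) (n : ℕ) : qbinom q n 0 = 1 := by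
  cases n <;> rfl

theorem qbinom_succ_succ (q : ℝ) (n k : ℕ) :
    qbinom q (n + 1) (k + 1) = qbinom q n k + q ^ (k + 1) * qbinom q n (k + 1) :=
  rfl

theorem qbinom_eq_zero_of_lt (q : ℝ) : ∀ {n k : ℕ}, n < k → qbinom q n k = 0
  | 0, _ + 1, _ => rfl
  | n + 1, k + 1, h => by
    rw [qbinom_succ_succ, qbinom_eq_zero_of_lt q (by omega), qbinom_eq_zero_of_lt q (by omega)]
    ring

/-- Since `qbinom q n k = 0` for `n < k`, truncated subtraction in a factor of it is harmless. -/
theorem mul_qbinom_congr (q : ℝ) (f : ℕ → ℝ) {n k a b : ℕ} (h : k ≤ n → a = b) :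
    f a * qbinom q n k = f b * qbinom q n k := by
  rcases le_or_gt k n with hk | hk
  · rw [h hk]
  · simp [qbinom_eq_zero_of_lt q hk]

theorem qbinom_succ_succ' (q : ℝ) :
    ∀ n k : ℕ, qbinom q (n + 1) (k + 1) = q ^ (n - k) * qbinom q n k + qbinom q n (k + 1)
  | 0, 0 => by simp [qbinom]
  | 0, k + 1 => by simp [qbinom]
  | m + 1, 0 => by
    have ih := qbinom_succ_succ' q m 0
    simp only [qbinom_succ_succ, qbinom_zero_right, Nat.sub_zero] at ih ⊢
    linear_combination q * ih
  | m + 1, j + 1 => by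
    have ih₁ := qbinom_succ_succ' q m j
    have ih₂ := qbinom_succ_succ' q m (j + 1)
    have hpow : q ^ (j + 2) * q ^ (m - (j + 1)) * qbinom q m (j + 1)
        = q ^ (m - j) * q ^ (j + 1) * qbinom q m (j + 1) := by
      simp only [← pow_add]
      exact mul_qbinom_congr q (q ^ ·) (by omega)
    rw [qbinom_succ_succ q (m + 1) (j + 1), Nat.add_sub_add_right]
    linear_combination ih₁ + q ^ (j + 2) * ih₂ - q ^ (m - j) * qbinom_succ_succ q m j
      - qbinom_succ_succ q m (j + 1) + hpow

theorem qint_sub_mul_qbinom (q : ℝ) :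
    ∀ n k : ℕ, qint q (n - k) * qbinom q n k = qint q n * qbinom q (n - 1) k
  | 0, k => by simp [qint]
  | m + 1, 0 => by simp [qbinom_zero_right]
  | 1, j + 1 => by simp [qint, qbinom_eq_zero_of_lt q (Nat.succ_pos j)]
  | p + 1 + 1, j + 1 => by
    have ih₁ := qint_sub_mul_qbinom q (p + 1) j
    have ih₂ := qint_sub_mul_qbinom q (p + 1) (j + 1)
    have hqint : qint q (p + 1 - j) * qbinom q (p + 1) (j + 1)
        = (qint q (p - j) + q ^ (p - j)) * qbinom q (p + 1) (j + 1) := by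
      rw [← qint_succ]
      exact mul_qbinom_congr q (qint q) (by omega)
    have hpow : q ^ (j + 1) * q ^ (p - j) * qbinom q (p + 1) (j + 1)
        = q ^ (p + 1) * qbinom q (p + 1) (j + 1) := by
      rw [← pow_add]
      exact mul_qbinom_congr q (q ^ ·) (by omega)
    simp only [Nat.add_sub_add_right, Nat.add_sub_cancel] at ih₁ ih₂ ⊢
    rw [qbinom_succ_succ q (p + 1) j]
    linear_combination ih₁ + q ^ (j + 1) * hqint + q ^ (j + 1) * ih₂ + hpow
      - qint q (p + 1) * qbinom_succ_succ q p j - qbinom q (p + 1) (j + 1) * qint_succ q (p + 1)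

theorem sum_qbinom_succ_mul (q : ℝ) (g : ℕ → ℝ) (n : ℕ) :
    ∑ i ∈ Finset.range (n + 2), qbinom q (n + 1) i * g i
      = ∑ i ∈ Finset.range (n + 2), qbinom q n i * g i
        + ∑ i ∈ Finset.range (n + 1), q ^ (n - i) * qbinom q n i * g (i + 1) := by
  simp only [Finset.sum_range_succ' _ (n + 1), qbinom_succ_succ', qbinom_zero_right, add_mul,
    Finset.sum_add_distrib]
  ring

theorem qHermite_succ (q x : ℝ) (n : ℕ) :
    qHermite q x (n + 1) = x * qHermite q x n - qint q n * qHermite q x (n - 1) := by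
  cases n with
  | zero => simp [qHermite, qint]
  | succ m => rfl

theorem bigH_eq_sum_range_of_le (q a x : ℝ) {n N : ℕ} (h : n + 1 ≤ N) :
    bigH q a x n = ∑ i ∈ Finset.range N,
      qbinom q n i * q ^ (i.choose 2) * (-a) ^ i * qHermite q x (n - i) := by
  refine Finset.sum_subset (Finset.range_subset_range.2 h) fun i _ hi => ?_
  rw [qbinom_eq_zero_of_lt q (by simpa using hi)]
  ring

theorem bigH_succ (q a x : ℝ) (n : ℕ) :
    bigH q a x (n + 1) = (x - a * q ^ n) * bigH q a x n - qint q n * bigH q a x (n - 1) := by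
  have hpascal := sum_qbinom_succ_mul q
    (fun i => q ^ (i.choose 2) * (-a) ^ i * qHermite q x (n + 1 - i)) n
  have hrecurrence : ∑ i ∈ Finset.range (n + 2),
      qbinom q n i * (q ^ (i.choose 2) * (-a) ^ i * qHermite q x (n + 1 - i))
        = x * bigH q a x n - qint q n * bigH q a x (n - 1) := by
    rw [bigH_eq_sum_range_of_le q a x (n := n) (N := n + 2) (by omega),
      bigH_eq_sum_range_of_le q a x (n := n - 1) (N := n + 2) (by omega), Finset.mul_sum,
      Finset.mul_sum, ← Finset.sum_sub_distrib]
    refine Finset.sum_congr rfl fun i _ => ?_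
    have hH := mul_qbinom_congr q (qHermite q x) (n := n) (k := i)
      (a := n + 1 - i) (b := n - i + 1) (by omega)
    have hqint := qint_sub_mul_qbinom q n i
    rw [qHermite_succ, show n - i - 1 = n - 1 - i by omega] at hH
    linear_combination q ^ (i.choose 2) * (-a) ^ i * hH
      - q ^ (i.choose 2) * (-a) ^ i * qHermite q x (n - 1 - i) * hqint
  have hweighted : ∑ i ∈ Finset.range (n + 1),
      q ^ (n - i) * qbinom q n i * (q ^ ((i + 1).choose 2) * (-a) ^ (i + 1)
        * qHermite q x (n + 1 - (i + 1)))
        = -(a * q ^ n) * bigH q a x n := by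
    rw [bigH, Finset.mul_sum]
    refine Finset.sum_congr rfl fun i _ => ?_
    have hpow := mul_qbinom_congr q (q ^ ·) (n := n) (k := i) (a := n - i + i) (b := n) (by omega)
    simp only [pow_add] at hpow
    rw [Nat.choose_succ_succ', Nat.choose_one_right, Nat.add_sub_add_right]
    linear_combination q ^ (i.choose 2) * (-a) ^ (i + 1) * qHermite q x (n - i) * hpow
  beta_reduce at hpascal
  calc bigH q a x (n + 1)
      = ∑ i ∈ Finset.range (n + 2),
          qbinom q (n + 1) i * (q ^ (i.choose 2) * (-a) ^ i * qHermite q x (n + 1 - i)) :=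
        Finset.sum_congr rfl fun _ _ => by ring
    _ = _ := by rw [hpascal, hrecurrence, hweighted]; ring

theorem bigH_three_term (q a x : ℝ) (n : ℕ) :
    x * bigH q a x n =
      bigH q a x (n + 1) + a * q ^ n * bigH q a x n
        + qint q n * bigH q a x (n - 1) := by
  rw [bigH_succ]
  ring
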